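/- arXiv:2208.13115 — 2 statements merged into one kernel-verified Lean document; each statement's English description precedes it below -/
import Mathlib

section
/- Let Λ ⊆ Z^d be a terrace. If x, y ∈ Z^d \ Λ_+, or if x, y ∈ Λ_+ \ Λ, then there is a self-avoiding nearest-neighbour path from x to y that is disjoint from Λ. -/
/-!
`ℤ^d \ Λ₊` is a lower set. Since a good set `C` is an upper set, `λ_C` consists exactly of the
points of `C` having some lower neighbour `z - e_i` outside `C`; hence a point above a point of
`C \ λ_C` has all its lower neighbours in `C`, and `Λ₊ \ Λ` is an upper set. In a lower (upper)
set, `x` and `y` are joined through `x ⊓ y` (`x ⊔ y`) by monotone staircases, which are walks in the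
Hasse diagram of `ℤ^d`, i.e. nearest-neighbour walks; erasing loops makes the walk self-avoiding.
-/

open Set

/-- The `i`-th standard basis vector of `ℤ^d`. -/
def eVec (d : ℕ) (i : Fin d) : Fin d → ℤ := Pi.single i 1

/-- `C_+ = ⋃_{z ∈ C} z_+`, where `z_+ = {y : y^[i] ≥ z^[i] for all i}`. -/
def plusSet {d : ℕ} (C : Set (Fin d → ℤ)) : Set (Fin d → ℤ) :=
  {y | ∃ z ∈ C, ∀ i, z i ≤ y i}

/-- `C_- = ⋃_{z ∈ C} z_-`, where `z_- = {y : y^[i] ≤ z^[i] for all i}`. -/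
def minusSet {d : ℕ} (C : Set (Fin d → ℤ)) : Set (Fin d → ℤ) :=
  {y | ∃ z ∈ C, ∀ i, y i ≤ z i}

/-- `C` is saturated: every axis-parallel line meets `C`. -/
def Saturated {d : ℕ} (C : Set (Fin d → ℤ)) : Prop :=
  ∀ (y : Fin d → ℤ) (i : Fin d), ∃ k : ℤ, y + k • eVec d i ∈ C

/-- `C` is solid above: `C_+ = C`. -/
def SolidAbove {d : ℕ} (C : Set (Fin d → ℤ)) : Prop := plusSet C = C

/-- `C` is bounded below: for every `y` and `i`, `{k : y + k e_i ∈ C}` is bounded below. -/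
def BoundedBelow {d : ℕ} (C : Set (Fin d → ℤ)) : Prop :=
  ∀ (y : Fin d → ℤ) (i : Fin d), ∃ m : ℤ, ∀ k : ℤ, y + k • eVec d i ∈ C → m ≤ k

/-- A set is good if it is saturated, solid above, and bounded below. -/
def Good {d : ℕ} (C : Set (Fin d → ℤ)) : Prop :=
  Saturated C ∧ SolidAbove C ∧ BoundedBelow C

/-- `λ_C`: the set of points `γ_C(y,i) = y + k e_i` with `k` smallest such that
`y + k e_i ∈ C`, over all `y ∈ ℤ^d` and `i ∈ [d]`. -/
def lambdaOf {d : ℕ} (C : Set (Fin d → ℤ)) : Set (Fin d → ℤ) :=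
  {z | ∃ (y : Fin d → ℤ) (i : Fin d) (k : ℤ),
    z = y + k • eVec d i ∧ z ∈ C ∧ ∀ k' : ℤ, y + k' • eVec d i ∈ C → k ≤ k'}

/-- A terrace is `λ_C` for some good set `C`. -/
def IsTerrace {d : ℕ} (Λ : Set (Fin d → ℤ)) : Prop :=
  ∃ C : Set (Fin d → ℤ), Good C ∧ Λ = lambdaOf C

/-- The box `[a,b] = {z : a^[i] ≤ z^[i] ≤ b^[i] for all i}`. -/
def box {d : ℕ} (a b : Fin d → ℤ) : Set (Fin d → ℤ) :=
  {z | ∀ i, a i ≤ z i ∧ z i ≤ b i}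

section Hasse

open SimpleGraph

theorem exists_hasse_walk_support_subset_Icc {α : Type*} [PartialOrder α] [LocallyFiniteOrder α]
    {a b : α} (hab : a ≤ b) :
    ∃ p : (hasse α).Walk a b, ∀ v ∈ p.support, v ∈ Icc a b := by
  induction hn : (Finset.Icc a b).card using Nat.strong_induction_on generalizing a with
  | _ n ih =>
    obtain rfl | hlt := hab.eq_or_lt
    · exact ⟨.nil, by simp⟩
    obtain ⟨c, hac, hcb⟩ := exists_covBy_le_of_lt hlt
    have hcard : (Finset.Icc c b).card < n :=
      hn ▸ Finset.card_lt_card (Finset.Icc_ssubset_Icc_left hab hac.lt le_rfl)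
    obtain ⟨p, hp⟩ := ih _ hcard hcb rfl
    refine ⟨.cons (hasse_adj.2 (Or.inl hac)) p, ?_⟩
    intro v hv
    rcases List.mem_cons.1 (Walk.support_cons _ _ ▸ hv) with rfl | hv
    · exact ⟨le_rfl, hab⟩
    · exact Icc_subset_Icc_left hac.le (hp v hv)

theorem IsLowerSet.exists_hasse_path {α : Type*} [Lattice α] [LocallyFiniteOrder α] {s : Set α}
    (hs : IsLowerSet s) {x y : α} (hx : x ∈ s) (hy : y ∈ s) :
    ∃ p : (hasse α).Walk x y, p.IsPath ∧ ∀ v ∈ p.support, v ∈ s := by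
  classical
  obtain ⟨p, hp⟩ := exists_hasse_walk_support_subset_Icc (inf_le_left : x ⊓ y ≤ x)
  obtain ⟨q, hq⟩ := exists_hasse_walk_support_subset_Icc (inf_le_right : x ⊓ y ≤ y)
  refine ⟨(p.reverse.append q).bypass, Walk.bypass_isPath _, fun v hv => ?_⟩
  rcases (Walk.mem_support_append_iff _ _).1 (Walk.support_bypass_subset_support _ hv) with hv | hv
  · exact hs (hp v (by simpa using hv)).2 hx
  · exact hs (hq v hv).2 hy

theorem IsUpperSet.exists_hasse_path {α : Type*} [Lattice α] [LocallyFiniteOrder α] {s : Set α}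
    (hs : IsUpperSet s) {x y : α} (hx : x ∈ s) (hy : y ∈ s) :
    ∃ p : (hasse α).Walk x y, p.IsPath ∧ ∀ v ∈ p.support, v ∈ s := by
  classical
  obtain ⟨p, hp⟩ := exists_hasse_walk_support_subset_Icc (le_sup_left : x ≤ x ⊔ y)
  obtain ⟨q, hq⟩ := exists_hasse_walk_support_subset_Icc (le_sup_right : y ≤ x ⊔ y)
  refine ⟨(p.append q.reverse).bypass, Walk.bypass_isPath _, fun v hv => ?_⟩
  rcases (Walk.mem_support_append_iff _ _).1 (Walk.support_bypass_subset_support _ hv) with hv | hv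
  · exact hs (hp v hv).1 hx
  · exact hs (hq v (by simpa using hv)).1 hy

end Hasse

section Lattice

variable {d : ℕ}

open SimpleGraph

theorem covBy_iff_exists_eq_add_eVec {x y : Fin d → ℤ} : x ⋖ y ↔ ∃ i, y = x + eVec d i := by
  simp only [Pi.covBy_iff, Order.covBy_iff_add_one_eq, funext_iff, Pi.add_apply, eVec,
    Pi.single_apply]
  refine exists_congr fun i =>
    ⟨fun ⟨hi, hj⟩ j => ?_, fun h => ⟨by simpa using (h i).symm, fun j hj => ?_⟩⟩
  · by_cases hji : j = i
    · subst hji; simpa using hi.symm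
    · simpa [hji] using (hj j hji).symm
  · simpa [hj] using (h j).symm

theorem hasse_adj_iff_exists_eVec {x y : Fin d → ℤ} :
    (hasse (Fin d → ℤ)).Adj x y ↔ ∃ i, y = x + eVec d i ∨ y = x - eVec d i := by
  simp only [hasse_adj, covBy_iff_exists_eq_add_eVec, eq_sub_iff_add_eq, eq_comm (a := x),
    ← exists_or]

theorem SimpleGraph.Walk.IsPath.exists_nearestNeighbour_path {S : Set (Fin d → ℤ)}
    {x y : Fin d → ℤ} {p : (hasse (Fin d → ℤ)).Walk x y} (hp : p.IsPath)
    (hpS : ∀ v ∈ p.support, v ∈ S) :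
    ∃ (n : ℕ) (γ : ℕ → Fin d → ℤ), γ 0 = x ∧ γ n = y ∧
      (∀ j < n, ∃ i : Fin d, γ (j + 1) = γ j + eVec d i ∨ γ (j + 1) = γ j - eVec d i) ∧
      (∀ j ≤ n, ∀ k ≤ n, γ j = γ k → j = k) ∧
      (∀ j ≤ n, γ j ∈ S) :=
  ⟨p.length, p.getVert, p.getVert_zero, p.getVert_length,
    fun _ hj => hasse_adj_iff_exists_eVec.1 (p.adj_getVert_succ hj),
    fun _ hj _ hk h => hp.getVert_injOn hj hk h,
    fun j _ => hpS _ (p.getVert_mem_support j)⟩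

end Lattice

section Terrace

variable {d : ℕ} {C : Set (Fin d → ℤ)}

theorem subset_plusSet : C ⊆ plusSet C := fun z hz => ⟨z, hz, fun _ => le_rfl⟩

theorem isUpperSet_plusSet : IsUpperSet (plusSet C) :=
  fun _ _ hab ⟨z, hz, hza⟩ => ⟨z, hz, fun i => (hza i).trans (hab i)⟩

theorem SolidAbove.isUpperSet (hC : SolidAbove C) : IsUpperSet C :=
  fun a _ hab ha => hC ▸ ⟨a, ha, hab⟩

theorem lambdaOf_subset : lambdaOf C ⊆ C := fun _ ⟨_, _, _, _, hz, _⟩ => hz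

theorem mem_lambdaOf_iff (hC : IsUpperSet C) {z : Fin d → ℤ} :
    z ∈ lambdaOf C ↔ z ∈ C ∧ ∃ i, z - eVec d i ∉ C := by
  constructor
  · rintro ⟨y, i, k, rfl, hz, hmin⟩
    refine ⟨hz, i, fun h => ?_⟩
    have : y + (k - 1) • eVec d i ∈ C := by rwa [sub_smul, one_smul, ← add_sub_assoc]
    linarith [hmin _ this]
  · rintro ⟨hz, i, hi⟩
    refine ⟨z, i, 0, by simp, hz, fun k hk => ?_⟩
    by_contra! hk0
    refine hi (hC (fun j => ?_) hk)
    by_cases hji : j = i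
    · subst hji
      simp only [eVec, Pi.add_apply, Pi.sub_apply, Pi.smul_apply, smul_eq_mul, Pi.single_eq_same]
      omega
    · simp [eVec, hji]

theorem isUpperSet_plusSet_diff_lambdaOf (hC : IsUpperSet C) :
    IsUpperSet (plusSet (lambdaOf C) \ lambdaOf C) := by
  rintro x w hxw ⟨hxP, hxΛ⟩
  refine ⟨isUpperSet_plusSet hxw hxP, fun hwΛ => ?_⟩
  obtain ⟨-, i, hi⟩ := (mem_lambdaOf_iff hC).1 hwΛ
  obtain ⟨z, hz, hzx⟩ := hxP
  have hxC : x ∈ C := hC hzx (lambdaOf_subset hz)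
  have : x - eVec d i ∈ C := by_contra fun h => hxΛ ((mem_lambdaOf_iff hC).2 ⟨hxC, i, h⟩)
  exact hi (hC (sub_le_sub_right hxw _) this)

end Terrace

open SimpleGraph in
theorem terrace_connected_complement {d : ℕ} (Λ : Set (Fin d → ℤ)) (h : IsTerrace Λ)
    (x y : Fin d → ℤ)
    (hxy : (x ∉ plusSet Λ ∧ y ∉ plusSet Λ) ∨
      (x ∈ plusSet Λ \ Λ ∧ y ∈ plusSet Λ \ Λ)) :
    ∃ (n : ℕ) (γ : ℕ → Fin d → ℤ), γ 0 = x ∧ γ n = y ∧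
      (∀ j < n, ∃ i : Fin d, γ (j + 1) = γ j + eVec d i ∨ γ (j + 1) = γ j - eVec d i) ∧
      (∀ j ≤ n, ∀ k ≤ n, γ j = γ k → j = k) ∧
      (∀ j ≤ n, γ j ∉ Λ) := by
  obtain ⟨C, ⟨-, hC, -⟩, rfl⟩ := h
  obtain ⟨p, hp, hpΛ⟩ : ∃ p : (hasse (Fin d → ℤ)).Walk x y,
      p.IsPath ∧ ∀ v ∈ p.support, v ∈ (lambdaOf C)ᶜ := by
    rcases hxy with ⟨hx, hy⟩ | ⟨hx, hy⟩
    · obtain ⟨p, hp, hpS⟩ := isUpperSet_plusSet.compl.exists_hasse_path hx hy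
      exact ⟨p, hp, fun v hv hvΛ => hpS v hv (subset_plusSet hvΛ)⟩
    · obtain ⟨p, hp, hpS⟩ :=
        (isUpperSet_plusSet_diff_lambdaOf hC.isUpperSet).exists_hasse_path hx hy
      exact ⟨p, hp, fun v hv => (hpS v hv).2⟩
  exact hp.exists_nearestNeighbour_path hpΛ
end

section
/- Let Λ ⊆ Z^d be a terrace, and let H_Λ = {x ∈ Λ : x + e_i ∈ Λ for all i}. If x ∈ H_Λ then either x is a corner of Λ, or there exists i ∈ [d] with x − e_i ∈ H_Λ. -/
open Set

lemma upward {d : ℕ} {C : Set (Fin d → ℤ)} (hC : SolidAbove C)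
    {z w : Fin d → ℤ} (hz : z ∈ C) (hle : ∀ i, z i ≤ w i) : w ∈ C := by
  rw [← hC]; exact ⟨z, hz, hle⟩

lemma lambda_char {d : ℕ} {C : Set (Fin d → ℤ)} (hC : SolidAbove C)
    (z : Fin d → ℤ) : z ∈ lambdaOf C ↔ z ∈ C ∧ ∃ i, z - eVec d i ∉ C := by
  constructor
  · rintro ⟨y, i, k, rfl, hzC, hmin⟩
    refine ⟨hzC, i, fun hmem => ?_⟩
    have : y + k • eVec d i - eVec d i = y + (k - 1) • eVec d i := by
      rw [sub_smul, one_smul]; abel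
    rw [this] at hmem
    have := hmin _ hmem
    omega
  · rintro ⟨hzC, i, hni⟩
    refine ⟨z, i, 0, by simp, hzC, fun k' hk' => ?_⟩
    by_contra hlt
    push_neg at hlt
    exact hni (upward hC hk' (fun j => by
      simp only [Pi.add_apply, Pi.sub_apply, Pi.smul_apply, eVec, Pi.single_apply]
      by_cases hji : j = i <;> simp [hji] <;> omega))

theorem H_point_corner_or_step_down {d : ℕ} (Λ : Set (Fin d → ℤ)) (h : IsTerrace Λ)
    (x : Fin d → ℤ) (hx : x ∈ Λ) (hH : ∀ i, x + eVec d i ∈ Λ) :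
    (∀ i, x - eVec d i ∉ Λ) ∨
      ∃ i : Fin d, x - eVec d i ∈ Λ ∧ ∀ j, x - eVec d i + eVec d j ∈ Λ := by
  obtain ⟨C, ⟨_, hsolid, _⟩, rfl⟩ := h
  by_cases hc : ∀ i, x - eVec d i ∉ lambdaOf C
  · exact Or.inl hc
  · push_neg at hc
    obtain ⟨i, hi⟩ := hc
    refine Or.inr ⟨i, hi, fun j => ?_⟩
    by_cases hji : j = i
    · subst hji
      have : x - eVec d j + eVec d j = x := by ring
      rw [this]; exact hx
    · have hiC : x - eVec d i ∈ C := ((lambda_char hsolid _).mp hi).1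
      obtain ⟨hjC, m, hm⟩ := (lambda_char hsolid _).mp (hH j)
      refine (lambda_char hsolid _).mpr ⟨upward hsolid hiC (fun l => by
        simp only [Pi.add_apply, Pi.sub_apply, eVec, Pi.single_apply]
        by_cases hlj : l = j <;> simp [hlj] <;> omega), m, fun hmem => ?_⟩
      refine hm (upward hsolid hmem (fun l => by
        simp only [Pi.add_apply, Pi.sub_apply, eVec, Pi.single_apply]
        by_cases hli : l = i <;> simp [hli] <;> omega))
end
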